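/- Let s ≥ 0 and let f : ℝ^d → [0,∞) be measurable and vanishing at infinity, with symmetric-decreasing rearrangement f*. Then ∫_{ℝ^d} f*(y) |y|^{2s} dy ≤ ∫_{ℝ^d} f(y) |y|^{2s} dy. -/

import Mathlib

/-!
Let `ν` be the measure with density `|y|^{2s}`. By the layer-cake formula it suffices to show
`ν {f* > t} ≤ ν {f > t}` for `t > 0`. Now `{f* > t}` lies in the centred ball `A*` whose
Lebesgue measure is that of `A = {f > t}`, and since the density is radially nondecreasing,
`A* \ A` (inside the radius of `A*`) carries less `ν`-mass than `A \ A*` (outside it), although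
both have the same Lebesgue measure: this is the bathtub principle `ν A* ≤ ν A`.
-/

open MeasureTheory Set Metric Filter Topology
open scoped ENNReal

/-- The symmetric-decreasing rearrangement of a nonnegative function `f` on `ℝ^d`,
defined via the layer-cake/distribution-function formula
`f*(x) = inf { t ≥ 0 : μ({f > t}) ≤ μ(B(0,|x|)) }`. -/
noncomputable def symmRearrange {d : ℕ} (f : EuclideanSpace ℝ (Fin d) → ℝ)
    (x : EuclideanSpace ℝ (Fin d)) : ℝ :=
  sInf {t : ℝ | 0 ≤ t ∧
    volume {y : EuclideanSpace ℝ (Fin d) | t < f y} ≤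
      volume (Metric.ball (0 : EuclideanSpace ℝ (Fin d)) ‖x‖)}

section Bathtub

variable {α : Type*} [MeasurableSpace α] {μ : Measure α}

/-- Bathtub principle: both sides are compared with `c * μ (A \ B)`, `c = ⨅ z ∈ A \ B, w z`. -/
theorem setLIntegral_le_setLIntegral_of_measure_le {w : α → ℝ≥0∞} {A B : Set α}
    (hA : MeasurableSet A) (hB : MeasurableSet B) (hμ : μ B ≤ μ A) (hB_fin : μ B ≠ ∞)
    (hw : ∀ y ∈ B \ A, ∀ z ∈ A \ B, w y ≤ w z) :
    ∫⁻ y in B, w y ∂μ ≤ ∫⁻ y in A, w y ∂μ := by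
  set c := ⨅ z ∈ A \ B, w z
  have h_sdiff : μ (B \ A) ≤ μ (A \ B) := by
    have h_inter : μ (B ∩ A) ≠ ∞ := measure_ne_top_of_subset inter_subset_left hB_fin
    rwa [← ENNReal.add_le_add_iff_right h_inter, measure_sdiff_add_inter B hA, inter_comm,
      measure_sdiff_add_inter A hB]
  calc ∫⁻ y in B, w y ∂μ
        = ∫⁻ y in A ∩ B, w y ∂μ + ∫⁻ y in B \ A, w y ∂μ := by
        rw [inter_comm, lintegral_inter_add_sdiff w B hA]
    _ ≤ ∫⁻ y in A ∩ B, w y ∂μ + c * μ (A \ B) := by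
        gcongr
        calc ∫⁻ y in B \ A, w y ∂μ ≤ ∫⁻ _ in B \ A, c ∂μ :=
              setLIntegral_mono' (hB.diff hA) fun y hy => le_iInf₂ (hw y hy)
          _ = c * μ (B \ A) := setLIntegral_const _ _
          _ ≤ c * μ (A \ B) := by gcongr
    _ ≤ ∫⁻ y in A ∩ B, w y ∂μ + ∫⁻ y in A \ B, w y ∂μ := by
        gcongr
        calc c * μ (A \ B) = ∫⁻ _ in A \ B, c ∂μ := (setLIntegral_const _ _).symm
          _ ≤ ∫⁻ z in A \ B, w z ∂μ :=
              setLIntegral_mono' (hA.diff hB) fun z hz => biInf_le w hz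
    _ = ∫⁻ y in A, w y ∂μ := lintegral_inter_add_sdiff w A hB

end Bathtub

section RearrangedSet

variable {E : Type*} [NormedAddCommGroup E] [MeasurableSpace E] (μ : Measure E)

/-- The paper's `A*`: for nontrivial `E`, the open ball centred at `0` with the measure of `A`. -/
def symmRearrangeSet (A : Set E) : Set E := {x | μ (ball 0 ‖x‖) < μ A}

/-- In a one-point space `A*` is empty unless `μ A ≠ 0`, i.e. unless `A = univ`. -/
theorem symmRearrangeSet_subset [Subsingleton E] (A : Set E) : symmRearrangeSet μ A ⊆ A := by
  intro x hx
  obtain ⟨y, hy⟩ := nonempty_of_measure_ne_zero (pos_of_gt hx).ne'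
  rwa [Subsingleton.elim x y]

variable [NormedSpace ℝ E] [BorelSpace E] [FiniteDimensional ℝ E] [μ.IsAddHaarMeasure]

theorem exists_measure_ball_eq [Nontrivial E] {m : ℝ≥0∞} (hm : m ≠ ∞) :
    ∃ R, 0 ≤ R ∧ μ (ball (0 : E) R) = m := by
  set n := Module.finrank ℝ E
  set κ := μ (ball (0 : E) 1)
  have hκ : κ ≠ 0 := (measure_ball_pos μ 0 one_pos).ne'
  have hκ_fin : κ ≠ ∞ := measure_ball_lt_top.ne
  have hq : 0 ≤ (m / κ).toReal := ENNReal.toReal_nonneg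
  refine ⟨(m / κ).toReal ^ (n⁻¹ : ℝ), by positivity, ?_⟩
  rw [Measure.addHaar_ball μ 0 (by positivity), ← Real.rpow_natCast, ← Real.rpow_mul hq,
    inv_mul_cancel₀ (Nat.cast_ne_zero.2 Module.finrank_pos.ne'), Real.rpow_one,
    ENNReal.ofReal_toReal (ENNReal.div_ne_top hm hκ), ENNReal.div_mul_cancel hκ hκ_fin]

theorem measure_ball_lt_measure_ball_iff [Nontrivial E] {r R : ℝ} (hr : 0 ≤ r) (hR : 0 ≤ R) :
    μ (ball (0 : E) r) < μ (ball (0 : E) R) ↔ r < R := by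
  rw [Measure.addHaar_ball μ 0 hr, Measure.addHaar_ball μ 0 hR,
    ENNReal.mul_lt_mul_iff_left (measure_ball_pos μ 0 one_pos).ne' measure_ball_lt_top.ne,
    ENNReal.ofReal_lt_ofReal_iff_of_nonneg (by positivity)]
  exact pow_lt_pow_iff_left₀ hr hR Module.finrank_pos.ne'

theorem symmRearrangeSet_eq_ball [Nontrivial E] {A : Set E} {R : ℝ} (hR : 0 ≤ R)
    (hA : μ (ball 0 R) = μ A) : symmRearrangeSet μ A = ball 0 R := by
  ext x
  rw [symmRearrangeSet, mem_ofPred_eq, ← hA,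
    measure_ball_lt_measure_ball_iff μ (norm_nonneg x) hR, mem_ball_zero_iff]

theorem setLIntegral_symmRearrangeSet_le {A : Set E} (hA : MeasurableSet A) (hA_fin : μ A ≠ ∞)
    {w : E → ℝ≥0∞} (hw : ∀ y z, ‖y‖ ≤ ‖z‖ → w y ≤ w z) :
    ∫⁻ x in symmRearrangeSet μ A, w x ∂μ ≤ ∫⁻ x in A, w x ∂μ := by
  rcases subsingleton_or_nontrivial E with hE | hE
  · exact lintegral_mono_set (symmRearrangeSet_subset μ A)
  obtain ⟨R, hR, hR_eq⟩ := exists_measure_ball_eq μ hA_fin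
  rw [symmRearrangeSet_eq_ball μ hR hR_eq]
  refine setLIntegral_le_setLIntegral_of_measure_le hA measurableSet_ball hR_eq.le
    (hR_eq ▸ hA_fin) fun y hy z hz => hw y z ?_
  have hy' : ‖y‖ < R := mem_ball_zero_iff.1 hy.1
  have hz' : R ≤ ‖z‖ := not_lt.1 fun h => hz.2 (mem_ball_zero_iff.2 h)
  exact hy'.le.trans hz'

end RearrangedSet

section LayerCake

variable {α : Type*} [MeasurableSpace α] {μ : Measure α}

theorem tendsto_measure_setOf_lt_atTop {g : α → ℝ} (hg : Measurable g)
    (h_fin : ∃ t, μ {x | t < g x} ≠ ∞) :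
    Tendsto (fun t => μ {x | t < g x}) atTop (𝓝 0) := by
  have h_empty : ⋂ t : ℝ, {x | t < g x} = ∅ :=
    eq_empty_of_forall_notMem fun x hx => lt_irrefl (g x) (mem_iInter.1 hx (g x))
  have := tendsto_measure_iInter_atTop (μ := μ) (s := fun t => {x | t < g x})
    (fun _ => (hg measurableSet_Ioi).nullMeasurableSet) (fun _ _ hst _ hx => hst.trans_lt hx) h_fin
  rwa [h_empty, measure_empty] at this

theorem lintegral_ofReal_mul_eq_lintegral_withDensity {g h : α → ℝ} (hg : AEMeasurable g μ)
    (hh : Measurable h) (h_nonneg : ∀ x, 0 ≤ h x) :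
    ∫⁻ x, ENNReal.ofReal (g x * h x) ∂μ =
      ∫⁻ x, ENNReal.ofReal (g x) ∂μ.withDensity fun x => ENNReal.ofReal (h x) := by
  rw [lintegral_withDensity_eq_lintegral_mul₀ hh.ennreal_ofReal.aemeasurable hg.ennreal_ofReal]
  exact lintegral_congr fun x => by rw [ENNReal.ofReal_mul' (h_nonneg x), mul_comm]; rfl

theorem lintegral_ofReal_le_lintegral_ofReal_of_meas_lt_le {f g : α → ℝ}
    (hf_nonneg : 0 ≤ᵐ[μ] f) (hf : AEMeasurable f μ) (hg_nonneg : 0 ≤ᵐ[μ] g)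
    (hg : AEMeasurable g μ) (h : ∀ t, 0 < t → μ {x | t < f x} ≤ μ {x | t < g x}) :
    ∫⁻ x, ENNReal.ofReal (f x) ∂μ ≤ ∫⁻ x, ENNReal.ofReal (g x) ∂μ := by
  rw [lintegral_eq_lintegral_meas_lt μ hf_nonneg hf,
    lintegral_eq_lintegral_meas_lt μ hg_nonneg hg]
  exact setLIntegral_mono' measurableSet_Ioi h

end LayerCake

section SymmRearrange

variable {d : ℕ} {f : EuclideanSpace ℝ (Fin d) → ℝ}

theorem symmRearrange_nonneg (x : EuclideanSpace ℝ (Fin d)) : 0 ≤ symmRearrange f x :=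
  Real.sInf_nonneg fun _ ht => ht.1

theorem symmRearrange_le_of_measure_le {t : ℝ} {x : EuclideanSpace ℝ (Fin d)} (ht : 0 ≤ t)
    (h : volume {y | t < f y} ≤ volume (ball (0 : EuclideanSpace ℝ (Fin d)) ‖x‖)) :
    symmRearrange f x ≤ t :=
  csInf_le ⟨0, fun _ hs => hs.1⟩ ⟨ht, h⟩

theorem setOf_lt_symmRearrange_subset {t : ℝ} (ht : 0 ≤ t) :
    {x | t < symmRearrange f x} ⊆ symmRearrangeSet volume {y | t < f y} :=
  fun _ hx => not_le.1 fun h => (symmRearrange_le_of_measure_le ht h).not_gt hx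

section VanishingAtInfinity

variable (hf : Measurable f) (hf_vanish : ∀ t : ℝ, 0 < t → volume {y | t < f y} < ⊤)
include hf hf_vanish

theorem symmRearrange_le_symmRearrange_of_norm_le {x y : EuclideanSpace ℝ (Fin d)} (hx : x ≠ 0)
    (hxy : ‖x‖ ≤ ‖y‖) :
    symmRearrange f y ≤ symmRearrange f x := by
  have h_small : ∀ᶠ t in atTop,
      volume {y | t < f y} < volume (ball (0 : EuclideanSpace ℝ (Fin d)) ‖x‖) :=
    (tendsto_measure_setOf_lt_atTop hf ⟨1, (hf_vanish 1 one_pos).ne⟩).eventually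
      (gt_mem_nhds (measure_ball_pos volume 0 (norm_pos_iff.2 hx)))
  obtain ⟨t, ht, ht0⟩ := (h_small.and (eventually_ge_atTop 0)).exists
  exact csInf_le_csInf ⟨0, fun _ hs => hs.1⟩ ⟨t, ht0, ht.le⟩
    fun s hs => ⟨hs.1, hs.2.trans (measure_mono (ball_subset_ball hxy))⟩

/-- Off `0`, `f* x = g (log ‖x‖)` for the antitone `g u = f* (exp u • e)`, `‖e‖ = 1`. -/
theorem aemeasurable_symmRearrange : AEMeasurable (symmRearrange f) volume := by
  rcases subsingleton_or_nontrivial (EuclideanSpace ℝ (Fin d)) with hE | hE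
  · exact Subsingleton.measurable.aemeasurable
  obtain ⟨e, he⟩ := exists_norm_eq (EuclideanSpace ℝ (Fin d)) zero_le_one
  have h_norm : ∀ u : ℝ, ‖Real.exp u • e‖ = Real.exp u := fun u => by
    rw [norm_smul, he, mul_one, Real.norm_of_nonneg (Real.exp_pos u).le]
  have h_anti : Antitone fun u => symmRearrange f (Real.exp u • e) := fun a b hab =>
    symmRearrange_le_symmRearrange_of_norm_le hf hf_vanish
      (norm_pos_iff.1 ((h_norm a).symm ▸ Real.exp_pos a))
      (by rw [h_norm, h_norm]; exact Real.exp_le_exp.2 hab)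
  refine ⟨_, h_anti.measurable.comp measurable_norm.log, ?_⟩
  filter_upwards [compl_mem_ae_iff.2 (measure_singleton 0)] with x hx
  simp only [symmRearrange, Function.comp_apply, h_norm, Real.exp_log (norm_pos_iff.2 hx)]

theorem withDensity_setOf_lt_symmRearrange_le {w : EuclideanSpace ℝ (Fin d) → ℝ≥0∞}
    (hw : ∀ y z, ‖y‖ ≤ ‖z‖ → w y ≤ w z) {t : ℝ} (ht : 0 < t) :
    volume.withDensity w {x | t < symmRearrange f x} ≤ volume.withDensity w {y | t < f y} :=
  calc volume.withDensity w {x | t < symmRearrange f x}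
      ≤ volume.withDensity w (symmRearrangeSet volume {y | t < f y}) :=
        measure_mono (setOf_lt_symmRearrange_subset ht.le)
    _ ≤ volume.withDensity w {y | t < f y} := by
        rw [withDensity_apply' w, withDensity_apply' w]
        exact setLIntegral_symmRearrangeSet_le volume (hf measurableSet_Ioi) (hf_vanish t ht).ne hw

end VanishingAtInfinity

end SymmRearrange

/-- **Rearrangement inequality for radially increasing weights.** Let `s ≥ 0` and let
`f : ℝ^d → [0,∞)` be measurable and vanishing at infinity. Then
`∫ f*(y) |y|^{2s} dy ≤ ∫ f(y) |y|^{2s} dy`. -/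
theorem rearrangement_weight_inequality (d : ℕ) (s : ℝ) (hs : 0 ≤ s)
    (f : EuclideanSpace ℝ (Fin d) → ℝ) (hf_meas : Measurable f)
    (hf_nonneg : ∀ x, 0 ≤ f x)
    (hf_vanish : ∀ t : ℝ, 0 < t → volume {y : EuclideanSpace ℝ (Fin d) | t < f y} < ⊤) :
    (∫⁻ y, ENNReal.ofReal (symmRearrange f y * ‖y‖ ^ (2 * s)) ∂volume) ≤
      (∫⁻ y, ENNReal.ofReal (f y * ‖y‖ ^ (2 * s)) ∂volume) := by
  have hw_meas : Measurable fun y : EuclideanSpace ℝ (Fin d) => ‖y‖ ^ (2 * s) :=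
    measurable_norm.pow_const _
  have hw_mono : ∀ y z : EuclideanSpace ℝ (Fin d), ‖y‖ ≤ ‖z‖ →
      ENNReal.ofReal (‖y‖ ^ (2 * s)) ≤ ENNReal.ofReal (‖z‖ ^ (2 * s)) := fun y z h =>
    ENNReal.ofReal_le_ofReal (Real.rpow_le_rpow (norm_nonneg y) h (by positivity))
  have hf_star := aemeasurable_symmRearrange hf_meas hf_vanish
  rw [lintegral_ofReal_mul_eq_lintegral_withDensity hf_star hw_meas fun _ => by positivity,
    lintegral_ofReal_mul_eq_lintegral_withDensity hf_meas.aemeasurable hw_meas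
      fun _ => by positivity]
  exact lintegral_ofReal_le_lintegral_ofReal_of_meas_lt_le (ae_of_all _ symmRearrange_nonneg)
    (hf_star.mono_ac (withDensity_absolutelyContinuous _ _)) (ae_of_all _ hf_nonneg)
    hf_meas.aemeasurable fun _ =>
      withDensity_setOf_lt_symmRearrange_le hf_meas hf_vanish hw_mono
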